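/- arXiv:2604.14924 — 5 statements merged into one kernel-verified Lean document; each statement's English description precedes it below -/
import Mathlib

section
/- If U: ℝ → ℝ ∪ {-∞} is increasing, upper semicontinuous, finite exactly on an interval [L,∞) (or (L,∞)) with L finite, tends to ∞ at ∞, and is dominated by an affine function, then its concave envelope U** (the smallest concave function ≥ U) is strictly increasing. -/
open Filter Set

noncomputable section

/-- Concavity for `EReal`-valued functions on `ℝ`. -/
def IsConcaveE (f : ℝ → EReal) : Prop :=
  ∀ x y : ℝ, ∀ t : ℝ, 0 ≤ t → t ≤ 1 →
    (t : EReal) * f x + ((1 - t : ℝ) : EReal) * f y ≤ f (t * x + (1 - t) * y)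

/-- `Uenv` is the concave envelope of `U`: the smallest concave function ≥ `U`. -/
def IsConcaveEnvelope (U Uenv : ℝ → EReal) : Prop :=
  IsConcaveE Uenv ∧ (∀ x, U x ≤ Uenv x) ∧
    ∀ g : ℝ → EReal, IsConcaveE g → (∀ x, U x ≤ g x) → ∀ x, Uenv x ≤ g x

/-- Standard assumptions on the utility `U : ℝ → ℝ ∪ {-∞}` with effective domain
`[L,∞)` or `(L,∞)`, `L` finite. -/
structure StdUtility (U : ℝ → EReal) (L : ℝ) : Prop where
  mono : Monotone U
  usc : UpperSemicontinuous U
  ne_top : ∀ x, U x ≠ ⊤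
  dom_sub : ∀ x : ℝ, U x ≠ ⊥ → L ≤ x
  dom_sup : ∀ x : ℝ, L < x → U x ≠ ⊥
  tendsto_top : Tendsto U atTop (nhds (⊤ : EReal))
  affine_dom : ∃ A B : ℝ, ∀ x : ℝ, U x ≠ ⊥ → U x < ((A * x + B : ℝ) : EReal)

/-- The concave envelope of a standard utility is strictly increasing on the
effective domain of `U`. -/
theorem concave_envelope_strictMono (U Uenv : ℝ → EReal) (L : ℝ)
    (hU : StdUtility U L) (henv : IsConcaveEnvelope U Uenv) :
    StrictMonoOn Uenv {x : ℝ | U x ≠ ⊥} := by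
  obtain ⟨hconc, hle, hmin⟩ := henv
  obtain ⟨A, B, hAB⟩ := hU.affine_dom
  have hg : ∀ x, Uenv x ≤ ((A * x + B : ℝ) : EReal) := by
    apply hmin
    · intro x y t ht0 ht1
      apply le_of_eq
      show (t : EReal) * ((A * x + B : ℝ) : EReal) + ((1 - t : ℝ) : EReal) * ((A * y + B : ℝ) : EReal)
          = ((A * (t * x + (1 - t) * y) + B : ℝ) : EReal)
      rw [← EReal.coe_mul, ← EReal.coe_mul, ← EReal.coe_add, EReal.coe_eq_coe_iff]
      ring
    · intro x
      by_cases hx : U x = ⊥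
      · simp [hx]
      · exact (hAB x hx).le
  have hne_top : ∀ x, Uenv x ≠ ⊤ := fun x =>
    ((hg x).trans_lt (EReal.coe_lt_top _)).ne
  intro a ha b hb hab
  have hna : Uenv a ≠ ⊥ := fun h => ha (le_bot_iff.mp (h ▸ hle a))
  have hnb : Uenv b ≠ ⊥ := fun h => hb (le_bot_iff.mp (h ▸ hle b))
  set ua := (Uenv a).toReal with hua_def
  set ub := (Uenv b).toReal with hub_def
  have hua : Uenv a = (ua : EReal) := (EReal.coe_toReal (hne_top a) hna).symm
  have hub : Uenv b = (ub : EReal) := (EReal.coe_toReal (hne_top b) hnb).symm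
  by_contra hcon
  have hba : ub ≤ ua := by
    have : Uenv b ≤ Uenv a := not_lt.mp hcon
    rw [hua, hub] at this
    exact_mod_cast this
  -- pick c > b with U c > ua
  have hev : ∀ᶠ x in atTop, (ua : EReal) < U x ∧ b < x := by
    filter_upwards [hU.tendsto_top.eventually
      (Ioi_mem_nhds (EReal.coe_lt_top ua)), eventually_gt_atTop b] with x h1 h2
    exact ⟨h1, h2⟩
  obtain ⟨c, hc1, hc2⟩ := hev.exists
  have hcenv : (ua : EReal) < Uenv c := hc1.trans_le (hle c)
  have hnc : Uenv c ≠ ⊥ := fun h => by simp [h] at hcenv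
  set uc := (Uenv c).toReal with huc_def
  have huc : Uenv c = (uc : EReal) := (EReal.coe_toReal (hne_top c) hnc).symm
  have hucua : ua < uc := by rw [huc] at hcenv; exact_mod_cast hcenv
  -- convexity combination
  set t := (c - b) / (c - a) with ht_def
  have hca : (0:ℝ) < c - a := by linarith
  have ht0 : 0 ≤ t := div_nonneg (by linarith) hca.le
  have ht1 : t ≤ 1 := by
    rw [div_le_one hca]; linarith
  have hbt : t * a + (1 - t) * c = b := by
    have h : t * (c - a) = c - b := by rw [ht_def]; exact div_mul_cancel₀ (c - b) hca.ne'
    linear_combination -h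
  have hkey := hconc a c t ht0 ht1
  rw [hbt, hua, huc, hub, ← EReal.coe_mul, ← EReal.coe_mul, ← EReal.coe_add] at hkey
  have hkey' : t * ua + (1 - t) * uc ≤ ub := by exact_mod_cast hkey
  have htlt : t < 1 := by
    rw [div_lt_one hca]; linarith
  nlinarith [mul_pos (by linarith : (0:ℝ) < 1 - t) (by linarith : (0:ℝ) < uc - ua)]
end
end

section
/- Under the standard assumptions on the utility U, the effective domain of the concave envelope U** equals the effective domain of U, i.e., {x : U**(x) > -∞} = {x : U(x) > -∞}. -/
open Filter Set

noncomputable section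

/-! The affine majorant `A x + B` of `U`, cut down to `-∞` off the domain of `U`, is concave
because that domain is an up-set, hence convex. The envelope lies below this concave majorant, so
its domain is no larger than that of `U`. -/

open Classical in
def extendBot (s : Set ℝ) (f : ℝ → ℝ) : ℝ → EReal :=
  fun x => if x ∈ s then (f x : EReal) else ⊥

lemma extendBot_of_mem {s : Set ℝ} {f : ℝ → ℝ} {x : ℝ} (hx : x ∈ s) :
    extendBot s f x = f x := by
  simp [extendBot, hx]

lemma extendBot_of_notMem {s : Set ℝ} {f : ℝ → ℝ} {x : ℝ} (hx : x ∉ s) :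
    extendBot s f x = ⊥ := by
  simp [extendBot, hx]

lemma extendBot_ne_bot_iff {s : Set ℝ} {f : ℝ → ℝ} {x : ℝ} :
    extendBot s f x ≠ ⊥ ↔ x ∈ s := by
  by_cases hx : x ∈ s <;> simp [extendBot, hx]

lemma ConcaveOn.isConcaveE_extendBot {s : Set ℝ} {f : ℝ → ℝ} (hf : ConcaveOn ℝ s f) :
    IsConcaveE (extendBot s f) := by
  intro x y t ht0 ht1
  -- `0 * ⊥ = 0` in `EReal`, so a point outside `s` only forces `⊥` when its weight is positive.
  rcases ht0.eq_or_lt with rfl | ht0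
  · simp
  rcases ht1.eq_or_lt with rfl | ht1
  · simp
  by_cases hx : x ∈ s
  swap
  · rw [extendBot_of_notMem hx, EReal.mul_bot_of_pos (mod_cast ht0), EReal.bot_add]
    exact bot_le
  by_cases hy : y ∈ s
  swap
  · rw [extendBot_of_notMem hy, EReal.mul_bot_of_pos (mod_cast sub_pos.2 ht1), EReal.add_bot]
    exact bot_le
  have hmem : t * x + (1 - t) * y ∈ s :=
    hf.1 hx hy ht0.le (sub_nonneg.2 ht1.le) (add_sub_cancel t 1)
  have hcomb : t * f x + (1 - t) * f y ≤ f (t * x + (1 - t) * y) :=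
    hf.2 hx hy ht0.le (sub_nonneg.2 ht1.le) (add_sub_cancel t 1)
  rw [extendBot_of_mem hx, extendBot_of_mem hy, extendBot_of_mem hmem]
  exact_mod_cast hcomb

lemma concaveOn_affine {s : Set ℝ} (hs : Convex ℝ s) (A B : ℝ) :
    ConcaveOn ℝ s fun x => A * x + B :=
  ((LinearMap.mulLeft ℝ A).concaveOn hs).add_const B

lemma Monotone.convex_setOf_ne_bot {U : ℝ → EReal} (hU : Monotone U) :
    Convex ℝ {x | U x ≠ ⊥} := by
  have hup : IsUpperSet {x | U x ≠ ⊥} := fun _ _ hab ha hb => ha (le_bot_iff.1 (hb ▸ hU hab))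
  exact hup.ordConnected.convex

lemma setOf_ne_bot_subset_of_le {α : Type*} {f g : α → EReal} (h : ∀ x, f x ≤ g x) :
    {x | f x ≠ ⊥} ⊆ {x | g x ≠ ⊥} :=
  fun x hfx hgx => hfx (le_bot_iff.1 (hgx ▸ h x))

/-- The effective domain of the concave envelope equals the effective domain of `U`. -/
theorem concave_envelope_dom_eq (U Uenv : ℝ → EReal) (L : ℝ)
    (hU : StdUtility U L) (henv : IsConcaveEnvelope U Uenv) :
    {x : ℝ | Uenv x ≠ ⊥} = {x : ℝ | U x ≠ ⊥} := by
  obtain ⟨A, B, hAB⟩ := hU.affine_dom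
  set D := {x | U x ≠ ⊥}
  have hg : IsConcaveE (extendBot D fun x => A * x + B) :=
    (concaveOn_affine hU.mono.convex_setOf_ne_bot A B).isConcaveE_extendBot
  have hUg : ∀ x, U x ≤ extendBot D (fun x => A * x + B) x := by
    intro x
    by_cases hx : x ∈ D
    · rw [extendBot_of_mem hx]
      exact (hAB x hx).le
    · rw [not_not.1 hx]
      exact bot_le
  refine Subset.antisymm (fun x hx => ?_) (setOf_ne_bot_subset_of_le henv.2.1)
  exact extendBot_ne_bot_iff.1 (setOf_ne_bot_subset_of_le (henv.2.2 _ hg hUg) hx)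
end
end

section
/- Under the standard assumptions, for every y > 0, the point I(y) = inf{x ∈ dom U : (U**)'(x) ≤ y} lies outside the set S = {x : U**(x) > U(x)}; consequently U(I(y)) = U**(I(y)). -/
open Filter Set

noncomputable section

section AuxLemmas

variable {U Uenv : ℝ → EReal} {L : ℝ}

lemma isConcaveE_of_pos {f : ℝ → EReal}
    (h : ∀ x y : ℝ, ∀ t : ℝ, 0 < t → t < 1 →
      (t : EReal) * f x + ((1 - t : ℝ) : EReal) * f y ≤ f (t * x + (1 - t) * y)) :
    IsConcaveE f := by
  intro x y t ht0 ht1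
  rcases eq_or_lt_of_le ht0 with rfl | ht0'
  · simp
  rcases eq_or_lt_of_le ht1 with rfl | ht1'
  · simp
  exact h x y t ht0' ht1'

lemma isConcaveE_affine (m b : ℝ) : IsConcaveE (fun x => ((m * x + b : ℝ) : EReal)) := by
  intro x y t ht0 ht1
  refine le_of_eq ?_
  rw [← EReal.coe_mul, ← EReal.coe_mul, ← EReal.coe_add, EReal.coe_eq_coe_iff]
  ring

lemma isConcaveE_min {f g : ℝ → EReal} (hf : IsConcaveE f) (hg : IsConcaveE g) :
    IsConcaveE (fun x => min (f x) (g x)) := by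
  intro x y t ht0 ht1
  have h0t : (0 : EReal) ≤ (t : EReal) := by exact_mod_cast ht0
  have h0t' : (0 : EReal) ≤ ((1 - t : ℝ) : EReal) := by exact_mod_cast (by linarith : (0:ℝ) ≤ 1 - t)
  refine le_min ?_ ?_
  · exact le_trans (add_le_add (mul_le_mul_of_nonneg_left (min_le_left _ _) h0t)
      (mul_le_mul_of_nonneg_left (min_le_left _ _) h0t')) (hf x y t ht0 ht1)
  · exact le_trans (add_le_add (mul_le_mul_of_nonneg_left (min_le_right _ _) h0t)
      (mul_le_mul_of_nonneg_left (min_le_right _ _) h0t')) (hg x y t ht0 ht1)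

lemma ereal_comb_self_le {a : EReal} (ha : a ≠ ⊤) {t : ℝ} (ht0 : 0 < t) (ht1 : t < 1) :
    (t : EReal) * a + ((1 - t : ℝ) : EReal) * a ≤ a := by
  induction a using EReal.rec with
  | bot => rw [EReal.coe_mul_bot_of_pos ht0, EReal.bot_add]
  | coe a => rw [← EReal.coe_mul, ← EReal.coe_mul, ← EReal.coe_add]
             exact le_of_eq (by rw [EReal.coe_eq_coe_iff]; ring)
  | top => exact absurd rfl ha

lemma env_ne_top (hU : StdUtility U L) (henv : IsConcaveEnvelope U Uenv) (x : ℝ) :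
    Uenv x ≠ ⊤ := by
  obtain ⟨A, B, hAB⟩ := hU.affine_dom
  have h := henv.2.2 (fun z => ((A * z + B : ℝ) : EReal)) (isConcaveE_affine A B)
    (fun z => by
      by_cases hz : U z = ⊥
      · rw [hz]; exact bot_le
      · exact (hAB z hz).le) x
  exact ne_top_of_le_ne_top (EReal.coe_ne_top _) h

lemma env_bot (hU : StdUtility U L) (henv : IsConcaveEnvelope U Uenv) {x : ℝ}
    (hx : U x = ⊥) : Uenv x = ⊥ := by
  have hconc : IsConcaveE (fun z => if U z = ⊥ then ⊥ else Uenv z) := by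
    refine isConcaveE_of_pos ?_
    intro a b t ht0 ht1
    show _ ≤ _
    by_cases ha : U a = ⊥
    · rw [if_pos ha, EReal.coe_mul_bot_of_pos ht0, EReal.bot_add]
      exact bot_le
    by_cases hb : U b = ⊥
    · rw [if_pos hb, EReal.coe_mul_bot_of_pos (by linarith : (0:ℝ) < 1 - t), EReal.add_bot]
      exact bot_le
    · have hmin : min a b ≤ t * a + (1 - t) * b := by
        rcases le_total a b with h | h
        · rw [min_eq_left h]; nlinarith
        · rw [min_eq_right h]; nlinarith
      have hc : U (t * a + (1 - t) * b) ≠ ⊥ := by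
        intro hcb
        have := hU.mono hmin
        rw [hcb, le_bot_iff] at this
        rcases le_total a b with h | h
        · exact ha (by rwa [min_eq_left h] at this)
        · exact hb (by rwa [min_eq_right h] at this)
      rw [if_neg ha, if_neg hb, if_neg hc]
      exact henv.1 a b t ht0.le ht1.le
  have := henv.2.2 _ hconc (fun z => by
    by_cases hz : U z = ⊥
    · rw [if_pos hz, hz]
    · rw [if_neg hz]; exact henv.2.1 z) x
  rwa [if_pos hx, le_bot_iff] at this

lemma env_at_L (hU : StdUtility U L) (henv : IsConcaveEnvelope U Uenv) :
    Uenv L = U L := by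
  refine le_antisymm ?_ (henv.2.1 L)
  have hgle : ∀ z, (if z = L then U L else Uenv z) ≤ Uenv z := by
    intro z
    by_cases hz : z = L
    · rw [if_pos hz, hz]; exact henv.2.1 L
    · rw [if_neg hz]
  have hconc : IsConcaveE (fun z => if z = L then U L else Uenv z) := by
    refine isConcaveE_of_pos ?_
    intro a b t ht0 ht1
    show _ ≤ _
    by_cases hz : t * a + (1 - t) * b = L
    · rcases eq_or_ne a b with rfl | hab
      · have haL : a = L := by nlinarith
        rw [if_pos haL, if_pos hz]
        exact ereal_comb_self_le (hU.ne_top L) ht0 ht1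
      · rcases lt_or_gt_of_ne hab with h | h
        · have haL : a < L := by nlinarith
          have hUa : U a = ⊥ := by
            by_contra hUa
            exact absurd (hU.dom_sub a hUa) (not_le.2 haL)
          rw [if_neg (ne_of_lt haL), env_bot hU henv hUa,
            EReal.coe_mul_bot_of_pos ht0, EReal.bot_add]
          exact bot_le
        · have hbL : b < L := by nlinarith
          have hUb : U b = ⊥ := by
            by_contra hUb
            exact absurd (hU.dom_sub b hUb) (not_le.2 hbL)
          rw [if_neg (ne_of_lt hbL), env_bot hU henv hUb,
            EReal.coe_mul_bot_of_pos (by linarith : (0:ℝ) < 1 - t), EReal.add_bot]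
          exact bot_le
    · have h0t : (0 : EReal) ≤ (t : EReal) := by exact_mod_cast ht0.le
      have h0t' : (0 : EReal) ≤ ((1 - t : ℝ) : EReal) := by
        exact_mod_cast (by linarith : (0:ℝ) ≤ 1 - t)
      rw [if_neg hz]
      calc (t : EReal) * (if a = L then U L else Uenv a)
            + ((1 - t : ℝ) : EReal) * (if b = L then U L else Uenv b)
          ≤ (t : EReal) * Uenv a + ((1 - t : ℝ) : EReal) * Uenv b :=
            add_le_add (mul_le_mul_of_nonneg_left (hgle a) h0t)
              (mul_le_mul_of_nonneg_left (hgle b) h0t')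
        _ ≤ Uenv (t * a + (1 - t) * b) := henv.1 a b t ht0.le ht1.le
  have := henv.2.2 _ hconc (fun z => by
    by_cases hz : z = L
    · rw [if_pos hz, hz]
    · rw [if_neg hz]; exact henv.2.1 z) L
  rwa [if_pos rfl] at this

lemma env_real (hU : StdUtility U L) (henv : IsConcaveEnvelope U Uenv) {x : ℝ}
    (hx : L < x) : Uenv x = (((Uenv x).toReal : ℝ) : EReal) := by
  have hb : Uenv x ≠ ⊥ := by
    intro h
    exact hU.dom_sup x hx (le_bot_iff.1 (h ▸ henv.2.1 x))
  exact (EReal.coe_toReal (env_ne_top hU henv x) hb).symm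

lemma trace_concave (hU : StdUtility U L) (henv : IsConcaveEnvelope U Uenv) :
    ConcaveOn ℝ (Ioi L) (fun z => (Uenv z).toReal) := by
  refine ⟨convex_Ioi L, ?_⟩
  intro x hx y hy a b ha hb hab
  have hx' : L < x := hx
  have hy' : L < y := hy
  have hb' : b = 1 - a := by linarith
  have hzmem : a • x + b • y ∈ Ioi L := (convex_Ioi L) hx hy ha hb hab
  have hz' : L < a * x + (1 - a) * y := by
    have := mem_Ioi.1 hzmem
    simpa [smul_eq_mul, hb'] using this
  have h := henv.1 x y a ha (by linarith)
  rw [env_real hU henv hx', env_real hU henv hy', env_real hU henv hz'] at h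
  rw [← EReal.coe_mul, ← EReal.coe_mul, ← EReal.coe_add, EReal.coe_le_coe_iff] at h
  rw [hb']
  simp only [smul_eq_mul]
  exact h

lemma deriv_antitone (hU : StdUtility U L) (henv : IsConcaveEnvelope U Uenv)
    (D : ℝ → ℝ)
    (hD : ∀ x : ℝ, L < x → HasDerivWithinAt (fun z => (Uenv z).toReal) (D x) (Ici x) x)
    {a b : ℝ} (ha : L < a) (hab : a ≤ b) : D b ≤ D a := by
  rcases eq_or_lt_of_le hab with rfl | hab
  · exact le_refl _
  set f : ℝ → ℝ := fun z => (Uenv z).toReal with hf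
  have hb : L < b := lt_trans ha hab
  have hconc := trace_concave hU henv
  have hIci : ∀ w : ℝ, Ici w \ {w} = Ioi w := fun w => Ici_sdiff_left
  -- D a ≥ slope a b
  have h1 : Tendsto (slope f a) (nhdsWithin a (Ioi a)) (nhds (D a)) := by
    have := (hasDerivWithinAt_iff_tendsto_slope).1 (hD a ha)
    rwa [hIci a] at this
  have h2 : Tendsto (slope f b) (nhdsWithin b (Ioi b)) (nhds (D b)) := by
    have := (hasDerivWithinAt_iff_tendsto_slope).1 (hD b hb)
    rwa [hIci b] at this
  have key1 : (f b - f a) / (b - a) ≤ D a := by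
    refine ge_of_tendsto h1 ?_
    have hev : ∀ᶠ z in nhdsWithin a (Ioi a), z < b :=
      eventually_nhdsWithin_of_eventually_nhds (eventually_lt_nhds hab)
    filter_upwards [hev, self_mem_nhdsWithin] with z hzb hza
    have hza' : a < z := hza
    -- slope f a b ≤ slope f a z using convexity of -f
    have := hconc.neg.secant_mono (a := a) (x := z) (y := b)
      (mem_Ioi.2 ha) (mem_Ioi.2 (lt_trans ha hza')) (mem_Ioi.2 hb)
      (ne_of_gt hza') (ne_of_gt hab) hzb.le
    simp only [Pi.neg_apply] at this
    rw [slope_def_field]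
    rw [div_le_div_iff₀ (by linarith) (by linarith)] at this ⊢
    nlinarith
  have key2 : D b ≤ (f b - f a) / (b - a) := by
    refine le_of_tendsto h2 ?_
    filter_upwards [self_mem_nhdsWithin] with z hz
    have hz' : b < z := hz
    have := hconc.slope_anti_adjacent (x := a) (y := b) (z := z)
      (mem_Ioi.2 ha) (mem_Ioi.2 (lt_trans hb hz')) hab hz'
    rw [slope_def_field]
    exact this
  linarith

lemma deriv_unique_Ici {f : ℝ → ℝ} {w m m' : ℝ}
    (h1 : HasDerivWithinAt f m (Ici w) w) (h2 : HasDerivWithinAt f m' (Ici w) w) :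
    m = m' := by
  have hIci : Ici w \ {w} = Ioi w := Ici_sdiff_left
  have t1 := (hasDerivWithinAt_iff_tendsto_slope).1 h1
  have t2 := (hasDerivWithinAt_iff_tendsto_slope).1 h2
  rw [hIci] at t1 t2
  exact tendsto_nhds_unique t1 t2

-- secant bound outside the chord interval
lemma secant_left (hU : StdUtility U L) (henv : IsConcaveEnvelope U Uenv)
    {c d z : ℝ} (hc : L < c) (hcd : c < d) (hz : z < c) :
    Uenv z ≤ (((Uenv c).toReal + ((Uenv d).toReal - (Uenv c).toReal) / (d - c) * (z - c)
      : ℝ) : EReal) := by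
  by_cases hbz : Uenv z = ⊥
  · rw [hbz]; exact bot_le
  have hdz : (0:ℝ) < d - z := by linarith
  have hdc : (0:ℝ) < d - c := by linarith
  set t : ℝ := (d - c) / (d - z) with ht
  have ht0 : 0 < t := div_pos hdc hdz
  have ht1 : t < 1 := by rw [ht, div_lt_one hdz]; linarith
  have hcomb : t * z + (1 - t) * d = c := by rw [ht]; field_simp; ring
  have h := henv.1 z d t ht0.le ht1.le
  rw [hcomb] at h
  have hzv : Uenv z = (((Uenv z).toReal : ℝ) : EReal) := by
    have := env_ne_top hU henv z
    exact (EReal.coe_toReal this hbz).symm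
  rw [hzv, env_real hU henv (lt_trans hc hcd), env_real hU henv hc,
    ← EReal.coe_mul, ← EReal.coe_mul, ← EReal.coe_add, EReal.coe_le_coe_iff] at h
  rw [hzv, EReal.coe_le_coe_iff]
  set v := (Uenv z).toReal
  set fc := (Uenv c).toReal
  set fd := (Uenv d).toReal
  rw [ht] at h
  rw [div_mul_eq_mul_div, one_sub_div hdz.ne', div_mul_eq_mul_div, ← add_div,
    div_le_iff₀ hdz] at h
  have hgoal : (v - fc) * (d - c) ≤ (fd - fc) * (z - c) := by linarith
  rw [div_mul_eq_mul_div, ← sub_le_iff_le_add', le_div_iff₀ hdc]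
  exact hgoal

lemma secant_right (hU : StdUtility U L) (henv : IsConcaveEnvelope U Uenv)
    {c d z : ℝ} (hc : L < c) (hcd : c < d) (hz : d < z) :
    Uenv z ≤ (((Uenv c).toReal + ((Uenv d).toReal - (Uenv c).toReal) / (d - c) * (z - c)
      : ℝ) : EReal) := by
  by_cases hbz : Uenv z = ⊥
  · rw [hbz]; exact bot_le
  have hzc : (0:ℝ) < z - c := by linarith
  have hdc : (0:ℝ) < d - c := by linarith
  set t : ℝ := (z - d) / (z - c) with ht
  have ht0 : 0 < t := div_pos (by linarith) hzc
  have ht1 : t < 1 := by rw [ht, div_lt_one hzc]; linarith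
  have hcomb : t * c + (1 - t) * z = d := by rw [ht]; field_simp; ring
  have h := henv.1 c z t ht0.le ht1.le
  rw [hcomb] at h
  have hzv : Uenv z = (((Uenv z).toReal : ℝ) : EReal) := by
    have := env_ne_top hU henv z
    exact (EReal.coe_toReal this hbz).symm
  rw [hzv, env_real hU henv (lt_trans hc hcd), env_real hU henv hc,
    ← EReal.coe_mul, ← EReal.coe_mul, ← EReal.coe_add, EReal.coe_le_coe_iff] at h
  rw [hzv, EReal.coe_le_coe_iff]
  set v := (Uenv z).toReal
  set fc := (Uenv c).toReal
  set fd := (Uenv d).toReal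
  rw [ht] at h
  rw [div_mul_eq_mul_div, one_sub_div hzc.ne', div_mul_eq_mul_div, ← add_div,
    div_le_iff₀ hzc] at h
  have hgoal : (v - fc) * (d - c) ≤ (fd - fc) * (z - c) := by linarith
  rw [div_mul_eq_mul_div, ← sub_le_iff_le_add', le_div_iff₀ hdc]
  exact hgoal

lemma exists_below (hU : StdUtility U L) (henv : IsConcaveEnvelope U Uenv)
    (D : ℝ → ℝ)
    (hD : ∀ x : ℝ, L < x → HasDerivWithinAt (fun z => (Uenv z).toReal) (D x) (Ici x) x)
    {y I : ℝ} (hLI : L < I) (hbot : U I ≠ ⊥) (hlt : U I < Uenv I)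
    (hDle : ∀ x, I < x → D x ≤ y) :
    ∃ c, L < c ∧ c < I ∧ D c ≤ y := by
  have hfI : Uenv I = (((Uenv I).toReal : ℝ) : EReal) := env_real hU henv hLI
  have hUI : U I = (((U I).toReal : ℝ) : EReal) := (EReal.coe_toReal (hU.ne_top I) hbot).symm
  have hufI : (U I).toReal < (Uenv I).toReal := by
    rw [hUI, hfI] at hlt; exact_mod_cast hlt
  set r : ℝ := ((U I).toReal + (Uenv I).toReal) / 2 with hrdef
  have hur : (U I).toReal < r := by rw [hrdef]; linarith
  have hrf : r < (Uenv I).toReal := by rw [hrdef]; linarith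
  have h1 : ∀ᶠ z in nhds I, U z < (r : EReal) := by
    refine hU.usc I (r : EReal) ?_
    show U I < (r : EReal); rw [hUI]; exact_mod_cast hur
  have hcont : ContinuousAt (fun z => (Uenv z).toReal) I :=
    ((trace_concave hU henv).continuousOn isOpen_Ioi).continuousAt (Ioi_mem_nhds hLI)
  have h2 : ∀ᶠ z in nhds I, r < (Uenv z).toReal := hcont.eventually (eventually_gt_nhds hrf)
  have h3 := (h1.and h2).and (eventually_gt_nhds hLI)
  rw [Metric.eventually_nhds_iff] at h3
  obtain ⟨δ, hδ, hball⟩ := h3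
  set c : ℝ := I - δ / 2 with hcdef
  set d : ℝ := I + δ / 2 with hddef
  have hcd : c < d := by rw [hcdef, hddef]; linarith
  have hcI : c < I := by rw [hcdef]; linarith
  have hId : I < d := by rw [hddef]; linarith
  have hIcc : ∀ z ∈ Icc c d, (U z < (r : EReal) ∧ r < (Uenv z).toReal) ∧ L < z := by
    intro z hz
    refine hball ?_
    rw [Real.dist_eq, abs_lt]
    rw [hcdef] at hz; rw [hddef] at hz
    obtain ⟨hz1, hz2⟩ := hz
    constructor <;> linarith
  have hLc : L < c := (hIcc c ⟨le_refl c, hcd.le⟩).2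
  have hrc : r < (Uenv c).toReal := (hIcc c ⟨le_refl c, hcd.le⟩).1.2
  have hrd : r < (Uenv d).toReal := (hIcc d ⟨hcd.le, le_refl d⟩).1.2
  have hdc0 : (0:ℝ) < d - c := by linarith
  have hMdc : ((Uenv d).toReal - (Uenv c).toReal) / (d - c) * (d - c)
      = (Uenv d).toReal - (Uenv c).toReal := div_mul_cancel₀ _ (ne_of_gt hdc0)
  -- the chord dominates r on [c,d]
  have hrchord : ∀ z ∈ Icc c d,
      r ≤ (Uenv c).toReal + ((Uenv d).toReal - (Uenv c).toReal) / (d - c) * (z - c) := by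
    intro z hz
    rcases le_or_gt 0 (((Uenv d).toReal - (Uenv c).toReal) / (d - c)) with hM | hM
    · nlinarith [mul_nonneg hM (sub_nonneg.2 hz.1)]
    · have := mul_le_mul_of_nonpos_left (sub_le_sub_right hz.2 c) hM.le
      linarith
  -- U is dominated by the chord line everywhere
  have hUle : ∀ z, U z ≤ (((Uenv c).toReal
      + ((Uenv d).toReal - (Uenv c).toReal) / (d - c) * (z - c) : ℝ) : EReal) := by
    intro z
    rcases lt_or_ge z c with hzc | hzc
    · exact le_trans (henv.2.1 z) (secant_left hU henv hLc hcd hzc)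
    rcases le_or_gt z d with hzd | hzd
    · refine le_trans (hIcc z ⟨hzc, hzd⟩).1.1.le ?_
      exact EReal.coe_le_coe_iff.2 (hrchord z ⟨hzc, hzd⟩)
    · exact le_trans (henv.2.1 z) (secant_right hU henv hLc hcd hzd)
  -- hence so is the envelope
  have hup : ∀ z, Uenv z ≤ (((Uenv c).toReal
      + ((Uenv d).toReal - (Uenv c).toReal) / (d - c) * (z - c) : ℝ) : EReal) := by
    have haff : IsConcaveE (fun z : ℝ => (((Uenv c).toReal
        + ((Uenv d).toReal - (Uenv c).toReal) / (d - c) * (z - c) : ℝ) : EReal)) := by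
      have heq : (fun z : ℝ => (((Uenv c).toReal
          + ((Uenv d).toReal - (Uenv c).toReal) / (d - c) * (z - c) : ℝ) : EReal))
          = (fun z : ℝ => (((((Uenv d).toReal - (Uenv c).toReal) / (d - c)) * z
            + ((Uenv c).toReal - ((Uenv d).toReal - (Uenv c).toReal) / (d - c) * c)
            : ℝ) : EReal)) := by
        funext z
        rw [EReal.coe_eq_coe_iff]
        ring
      rw [heq]
      exact isConcaveE_affine _ _
    have hgconc := isConcaveE_min henv.1 haff
    have h := henv.2.2 _ hgconc (fun z => le_min (henv.2.1 z) (hUle z))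
    intro z
    exact le_trans (h z) (min_le_right _ _)
  -- and on [c,d] the envelope equals the chord
  have hchord_eq : ∀ z ∈ Icc c d, (Uenv z).toReal
      = (Uenv c).toReal + ((Uenv d).toReal - (Uenv c).toReal) / (d - c) * (z - c) := by
    intro z hz
    have hzL : L < z := lt_of_lt_of_le hLc hz.1
    have hle1 : (Uenv z).toReal
        ≤ (Uenv c).toReal + ((Uenv d).toReal - (Uenv c).toReal) / (d - c) * (z - c) := by
      have := hup z
      rw [env_real hU henv hzL] at this
      exact_mod_cast this
    have hge : ((((Uenv c).toReal
        + ((Uenv d).toReal - (Uenv c).toReal) / (d - c) * (z - c)) : ℝ) : EReal)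
        ≤ Uenv z := by
      have ht0 : 0 ≤ (d - z) / (d - c) := div_nonneg (by linarith [hz.2]) hdc0.le
      have ht1 : (d - z) / (d - c) ≤ 1 := by
        rw [div_le_one hdc0]; linarith [hz.1]
      have hcomb : (d - z) / (d - c) * c + (1 - (d - z) / (d - c)) * d = z := by
        field_simp
        ring
      have h := henv.1 c d ((d - z) / (d - c)) ht0 ht1
      rw [hcomb, env_real hU henv hLc, env_real hU henv (hLc.trans hcd),
        ← EReal.coe_mul, ← EReal.coe_mul, ← EReal.coe_add] at h
      refine le_trans (le_of_eq ?_) h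
      rw [EReal.coe_eq_coe_iff]
      field_simp
      ring
    have hle2 : (Uenv c).toReal + ((Uenv d).toReal - (Uenv c).toReal) / (d - c) * (z - c)
        ≤ (Uenv z).toReal := by
      rw [env_real hU henv hzL] at hge
      exact_mod_cast hge
    linarith
  -- the one-sided derivative equals the chord slope at any w ∈ [c, d)
  have hDeq : ∀ w, c ≤ w → w < d →
      D w = ((Uenv d).toReal - (Uenv c).toReal) / (d - c) := by
    intro w hcw hwd
    have hLw : L < w := lt_of_lt_of_le hLc hcw
    have hchord_der : HasDerivAt (fun z : ℝ => (Uenv c).toReal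
        + ((Uenv d).toReal - (Uenv c).toReal) / (d - c) * (z - c))
        (((Uenv d).toReal - (Uenv c).toReal) / (d - c)) w := by
      have h1 : HasDerivAt (fun z : ℝ => z - c) 1 w := (hasDerivAt_id w).sub_const c
      have h2 := (h1.const_mul (((Uenv d).toReal - (Uenv c).toReal) / (d - c))).const_add
        ((Uenv c).toReal)
      simpa using h2
    have hev : (fun z => (Uenv z).toReal)
        =ᶠ[nhdsWithin w (Ici w)] (fun z : ℝ => (Uenv c).toReal
          + ((Uenv d).toReal - (Uenv c).toReal) / (d - c) * (z - c)) := by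
      filter_upwards [eventually_nhdsWithin_of_eventually_nhds (eventually_lt_nhds hwd),
        self_mem_nhdsWithin] with z hz1 hz2
      exact hchord_eq z ⟨le_trans hcw hz2, hz1.le⟩
    have hcongr : HasDerivWithinAt (fun z => (Uenv z).toReal)
        (((Uenv d).toReal - (Uenv c).toReal) / (d - c)) (Ici w) w :=
      (hchord_der.hasDerivWithinAt).congr_of_eventuallyEq hev
        (hchord_eq w ⟨hcw, hwd.le⟩)
    exact deriv_unique_Ici (hD w hLw) hcongr
  -- conclude
  have hw1 : D ((I + d) / 2) = ((Uenv d).toReal - (Uenv c).toReal) / (d - c) :=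
    hDeq ((I + d) / 2) (by linarith) (by linarith)
  have hm_le : ((Uenv d).toReal - (Uenv c).toReal) / (d - c) ≤ y := by
    rw [← hw1]
    exact hDle _ (by linarith)
  have hDc : D c = ((Uenv d).toReal - (Uenv c).toReal) / (d - c) :=
    hDeq c (le_refl c) hcd
  exact ⟨c, hLc, hcI, by rw [hDc]; exact hm_le⟩

end AuxLemmas

/-- For every `y > 0`, the point `I(y)` lies outside `S = {x : U**(x) > U(x)}`, and
consequently `U(I(y)) = U**(I(y))`. -/
theorem I_not_mem_S (U Uenv : ℝ → EReal) (L : ℝ)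
    (hU : StdUtility U L) (henv : IsConcaveEnvelope U Uenv)
    (D : ℝ → ℝ)
    (hD : ∀ x : ℝ, L < x → HasDerivWithinAt (fun z => (Uenv z).toReal) (D x) (Ici x) x)
    (hInada : Tendsto D atTop (nhds 0))
    (hInada' : U L = ⊥ → Tendsto D (nhdsWithin L (Ioi L)) atTop) :
    ∀ y : ℝ, 0 < y →
      sInf {x : ℝ | U x ≠ ⊥ ∧ D x ≤ y} ∉ {x : ℝ | U x ≠ ⊥ ∧ U x < Uenv x} ∧
      U (sInf {x : ℝ | U x ≠ ⊥ ∧ D x ≤ y})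
        = Uenv (sInf {x : ℝ | U x ≠ ⊥ ∧ D x ≤ y}) := by

  intro y hy
  have hne : {x : ℝ | U x ≠ ⊥ ∧ D x ≤ y}.Nonempty := by
    have h1 : ∀ᶠ x in atTop, D x < y := hInada.eventually (eventually_lt_nhds hy)
    have h2 : ∀ᶠ x in atTop, L < x := eventually_gt_atTop L
    obtain ⟨x, hx1, hx2⟩ := (h1.and h2).exists
    exact ⟨x, hU.dom_sup x hx2, hx1.le⟩
  have hbdd : BddBelow {x : ℝ | U x ≠ ⊥ ∧ D x ≤ y} := ⟨L, fun x hx => hU.dom_sub x hx.1⟩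
  set I := sInf {x : ℝ | U x ≠ ⊥ ∧ D x ≤ y} with hIdef
  have hLI : L ≤ I := le_csInf hne (fun b hb => hU.dom_sub b hb.1)
  have key : ¬(U I ≠ ⊥ ∧ U I < Uenv I) := by
    rintro ⟨hbot, hlt⟩
    rcases eq_or_lt_of_le hLI with hEL | hLI'
    · rw [← hEL, env_at_L hU henv] at hlt
      exact lt_irrefl _ hlt
    · have hDle : ∀ x, I < x → D x ≤ y := by
        intro x hx
        obtain ⟨a, ha, hax⟩ := exists_lt_of_csInf_lt hne hx
        have hIa : I ≤ a := csInf_le hbdd ha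
        exact le_trans (deriv_antitone hU henv D hD (lt_of_lt_of_le hLI' hIa) hax.le) ha.2
      obtain ⟨c, hLc, hcI, hDc⟩ := exists_below hU henv D hD hLI' hbot hlt hDle
      have : I ≤ c := csInf_le hbdd ⟨hU.dom_sup c hLc, hDc⟩
      linarith
  refine ⟨key, ?_⟩
  by_cases hb : U I = ⊥
  · rw [hb, env_bot hU henv hb]
  · refine le_antisymm (henv.2.1 I) ?_
    by_contra hlt
    exact key ⟨hb, not_le.1 hlt⟩
end
end

section
/- Let u(t,x) be finite, continuous, strictly increasing and concave in x, and suppose u is a viscosity solution of the HJB equation -∂_t u - sup_{π ∈ ℝ^d} L(t,x,u;π) = 0 where L contains the term (r(x - Σπ_i) + Σμ_iπ_i)∂_x u + ½(Σπ_iσ_i)ᵀ(Σπ_iσ_i)∂_{xx}u with μ ≠ r·1 and σ invertible. If u(t,·) is affine (∂_{xx}u = 0) with ∂_x u > 0 on an open interval where u is smooth, then the Hamiltonian sup_{π} L(t,x,u;π) = +∞, contradicting finiteness; hence u(t,·) cannot be affine on any open interval, i.e., u(t,·) is strictly concave. -/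
open Set

noncomputable section

private lemma aux_affine (d : ℕ) (r : ℝ) (μ : Fin d → ℝ)
    (σ : Matrix (Fin d) (Fin d) ℝ) (hμ : ∃ i, μ i ≠ r)
    (D : Set ℝ) (hDc : Convex ℝ D)
    (u ut : ℝ → ℝ)
    (hconc : ConcaveOn ℝ D u) (hmono : StrictMonoOn u D)
    (hHJB : ∀ x ∈ D, ∀ p A : ℝ, HasDerivAt u p x → HasDerivAt (deriv u) A x →
      BddAbove (range fun π : Fin d → ℝ =>
        (r * (x - ∑ i, π i) + ∑ i, μ i * π i) * p
          + (1 / 2) * (∑ i, ∑ j, π i * π j * (σ * σ.transpose) i j) * A) ∧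
      ut x + sSup (range fun π : Fin d → ℝ =>
        (r * (x - ∑ i, π i) + ∑ i, μ i * π i) * p
          + (1 / 2) * (∑ i, ∑ j, π i * π j * (σ * σ.transpose) i j) * A) = 0)
    {x y z : ℝ} (hx : x ∈ D) (hy : y ∈ D) (hz : z ∈ Ioo x y)
    (heq : u z = u x + (u y - u x) / (y - x) * (z - x)) : False := by
  obtain ⟨hxz, hzy⟩ := hz
  have hxy : x < y := hxz.trans hzy
  have hyx : (0:ℝ) < y - x := by linarith
  have hyx' : y - x ≠ 0 := ne_of_gt hyx
  set m : ℝ := (u y - u x) / (y - x) with hm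
  have hm0 : 0 < m := div_pos (by linarith [hmono hx hy hxy]) hyx
  have hIccD : Icc x y ⊆ D := hDc.ordConnected.out hx hy
  have hzD : z ∈ D := hIccD ⟨hxz.le, hzy.le⟩
  have hy' : u y = u x + m * (y - x) := by
    rw [hm, div_mul_cancel₀ _ hyx']; ring
  -- affine on Ioo x y
  have key : ∀ t ∈ Ioo x y, u t = u x + m * (t - x) := by
    rintro t ⟨hxt, hty⟩
    have htD : t ∈ D := hIccD ⟨hxt.le, hty.le⟩
    -- lower bound from concavity: t is a convex combination of x and y
    have hlow : u x + m * (t - x) ≤ u t := by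
      have ha' : (0:ℝ) ≤ (y - t) / (y - x) := div_nonneg (by linarith) hyx.le
      have hb' : (0:ℝ) ≤ (t - x) / (y - x) := div_nonneg (by linarith) hyx.le
      have hab' : (y - t) / (y - x) + (t - x) / (y - x) = 1 := by
        field_simp
        ring
      have h := hconc.2 hx hy ha' hb' hab'
      have hc : ((y - t) / (y - x)) • x + ((t - x) / (y - x)) • y = t := by
        simp only [smul_eq_mul]; field_simp; ring
      rw [hc] at h
      simp only [smul_eq_mul] at h
      have hval2 : (y - t) / (y - x) * u x + (t - x) / (y - x) * u y
          = u x + m * (t - x) := by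
        rw [hm]; field_simp; ring
      rw [hval2] at h
      exact h
    -- upper bound
    have hup : u t ≤ u x + m * (t - x) := by
      rcases lt_trichotomy t z with htz | rfl | hzt
      · have hyz : (0:ℝ) < y - z := by linarith
        have hzt : (0:ℝ) < z - t := by linarith
        have hs := hconc.slope_anti_adjacent htD hy htz hzy
        have h1 : (u y - u z) / (y - z) = m := by
          rw [heq, hy']
          have e : u x + m * (y - x) - (u x + m * (z - x)) = m * (y - z) := by ring
          rw [e, mul_div_assoc, div_self (ne_of_gt hyz), mul_one]
        rw [h1] at hs
        have h2 := (le_div_iff₀ hzt).mp hs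
        rw [heq] at h2
        have e2 : m * (z - x) - m * (z - t) = m * (t - x) := by ring
        linarith
      · linarith [heq]
      · have htz : (0:ℝ) < t - z := by linarith
        have hzx : (0:ℝ) < z - x := by linarith
        have hs := hconc.slope_anti_adjacent hx htD hxz hzt
        have h1 : (u z - u x) / (z - x) = m := by
          rw [heq]
          have e : u x + m * (z - x) - u x = m * (z - x) := by ring
          rw [e, mul_div_assoc, div_self (ne_of_gt hzx), mul_one]
        rw [h1] at hs
        have h2 := (div_le_iff₀ htz).mp hs
        rw [heq] at h2
        have e2 : m * (z - x) + m * (t - z) = m * (t - x) := by ring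
        linarith
    linarith
  -- u has derivative m on Ioo x y
  have hder : ∀ w ∈ Ioo x y, HasDerivAt u m w := by
    intro w hw
    have hL : HasDerivAt (fun t => u x + m * (t - x)) m w := by
      simpa using (((hasDerivAt_id w).sub_const x).const_mul m).const_add (u x)
    refine hL.congr_of_eventuallyEq ?_
    filter_upwards [isOpen_Ioo.mem_nhds hw] with t ht using key t ht
  have hz' : z ∈ Ioo x y := ⟨hxz, hzy⟩
  have hd1 : HasDerivAt u m z := hder z hz'
  have hd2 : HasDerivAt (deriv u) 0 z := by
    refine (hasDerivAt_const z m).congr_of_eventuallyEq ?_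
    filter_upwards [isOpen_Ioo.mem_nhds hz'] with t ht using (hder t ht).deriv
  obtain ⟨⟨M, hM⟩, -⟩ := hHJB z hzD m 0 hd1 hd2
  obtain ⟨i, hi⟩ := hμ
  have hir : μ i - r ≠ 0 := sub_ne_zero.mpr hi
  set c : ℝ := (M / m - r * z + 1) / (μ i - r) with hc
  have hval : (fun π : Fin d → ℝ =>
        (r * (z - ∑ j, π j) + ∑ j, μ j * π j) * m
          + (1 / 2) * (∑ j, ∑ k, π j * π k * (σ * σ.transpose) j k) * 0)
      (Pi.single i c) ≤ M := hM (mem_range_self _)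
  simp only [mul_zero, add_zero] at hval
  have hs1 : ∑ j, (Pi.single i c : Fin d → ℝ) j = c := by
    simp [Finset.sum_pi_single']
  have hs2 : ∑ j, μ j * (Pi.single i c : Fin d → ℝ) j = μ i * c := by
    simp [Pi.single_apply, mul_ite, mul_zero, Finset.sum_ite_eq']
  rw [hs1, hs2] at hval
  have hcc : (μ i - r) * c = M / m - r * z + 1 := by
    rw [hc, mul_div_cancel₀ _ hir]
  have hvv : (r * (z - c) + μ i * c) * m = M + m := by
    have e : r * (z - c) + μ i * c = r * z + (μ i - r) * c := by ring
    rw [e, hcc]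
    field_simp
    ring
  rw [hvv] at hval
  linarith

/-- If the concave, strictly increasing value function `u(t,·)` satisfies the HJB
equation (with a finite Hamiltonian) at every point where it is twice
differentiable, and `μ ≠ r·1`, then `u(t,·)` cannot be affine with positive slope
on any open interval: it is strictly concave. -/
theorem value_function_strictConcave (d : ℕ) (r : ℝ) (μ : Fin d → ℝ)
    (σ : Matrix (Fin d) (Fin d) ℝ) (hμ : ∃ i, μ i ≠ r)
    (D : Set ℝ) (hDo : IsOpen D) (hDc : Convex ℝ D)
    (u ut : ℝ → ℝ)
    (hconc : ConcaveOn ℝ D u) (hmono : StrictMonoOn u D)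
    (hHJB : ∀ x ∈ D, ∀ p A : ℝ, HasDerivAt u p x → HasDerivAt (deriv u) A x →
      BddAbove (range fun π : Fin d → ℝ =>
        (r * (x - ∑ i, π i) + ∑ i, μ i * π i) * p
          + (1 / 2) * (∑ i, ∑ j, π i * π j * (σ * σ.transpose) i j) * A) ∧
      ut x + sSup (range fun π : Fin d → ℝ =>
        (r * (x - ∑ i, π i) + ∑ i, μ i * π i) * p
          + (1 / 2) * (∑ i, ∑ j, π i * π j * (σ * σ.transpose) i j) * A) = 0) :
    StrictConcaveOn ℝ D u := by
  refine ⟨hDc, fun x hx y hy hxy a b ha hb hab => ?_⟩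
  by_contra h
  push_neg at h
  have hle := hconc.2 hx hy ha.le hb.le hab
  have heq : u (a • x + b • y) = a * u x + b * u y := le_antisymm h (by simpa using hle)
  simp only [smul_eq_mul] at heq ⊢
  rcases hxy.lt_or_gt with hlt | hlt
  · have ha1 : a = 1 - b := by linarith
    have hz1 : x < a * x + b * y := by
      have h1 : a * x + b * x = x := by rw [ha1]; ring
      have h2 : b * x < b * y := mul_lt_mul_of_pos_left hlt hb
      linarith
    have hz2 : a * x + b * y < y := by
      have h1 : a * y + b * y = y := by rw [ha1]; ring
      have h2 : a * x < a * y := mul_lt_mul_of_pos_left hlt ha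
      linarith
    have hyx' : y - x ≠ 0 := sub_ne_zero.mpr hlt.ne'
    have heq' : u (a * x + b * y)
        = u x + (u y - u x) / (y - x) * ((a * x + b * y) - x) := by
      rw [heq]
      have e1 : (a * x + b * y) - x = b * (y - x) := by rw [ha1]; ring
      rw [e1]
      have e2 : (u y - u x) / (y - x) * (b * (y - x)) = (u y - u x) * b := by
        field_simp
      rw [e2, ha1]; ring
    exact absurd (aux_affine d r μ σ hμ D hDc u ut hconc hmono hHJB hx hy
      (z := a * x + b * y) ⟨hz1, hz2⟩ heq') (not_false)
  · have hb1 : b = 1 - a := by linarith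
    have hz1 : y < a * x + b * y := by
      have h1 : a * y + b * y = y := by rw [hb1]; ring
      have h2 : a * y < a * x := mul_lt_mul_of_pos_left hlt ha
      linarith
    have hz2 : a * x + b * y < x := by
      have h1 : a * x + b * x = x := by rw [hb1]; ring
      have h2 : b * y < b * x := mul_lt_mul_of_pos_left hlt hb
      linarith
    have hxy' : x - y ≠ 0 := sub_ne_zero.mpr hlt.ne'
    have heq' : u (a * x + b * y)
        = u y + (u x - u y) / (x - y) * ((a * x + b * y) - y) := by
      rw [heq]
      have e1 : (a * x + b * y) - y = a * (x - y) := by rw [hb1]; ring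
      rw [e1]
      have e2 : (u x - u y) / (x - y) * (a * (x - y)) = (u x - u y) * a := by
        field_simp
      rw [e2, hb1]; ring
    exact absurd (aux_affine d r μ σ hμ D hDc u ut hconc hmono hHJB hy hx
      (z := a * x + b * y) ⟨hz1, hz2⟩ heq') (not_false)
end
end

section
/- For the utility U(x) = 0 for x ∈ [0,1] and U(x) = log(x) + 1 for x > 1 (and -∞ for x < 0), the Legendre-Fenchel conjugate is V(y) = -log(y) for 0 < y < 1 and V(y) = 0 for y ≥ 1, and the concave envelope is U**(x) = x for x ∈ [0,1] and U**(x) = log(x) + 1 for x > 1. -/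
/-!
Every tangent line `x ↦ x y - log y` (`0 < y ≤ 1`) of `x ↦ log x + 1` lies above `U16`, and `E16`
is their pointwise minimum, attained at `y = min 1 x⁻¹`; hence `E16` is concave, and the same
inequality `log (x y) ≤ x y - 1` computes the conjugate, whose maximiser is `x = y⁻¹` (or `x = 0`
when `y ≥ 1`). Minimality: a concave `g ≥ U16` satisfies `g x ≥ (x / z) g z ≥ (x / z) (log z + 1)`
on the chord from `0` to any `z > 1`, and letting `z → 1⁺` gives `g x ≥ x` on `[0, 1]`.
-/

open Set

noncomputable section

/-- The utility `U(x) = 0` on `[0,1]`, `U(x) = log x + 1` for `x > 1`. -/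
def U16 : ℝ → ℝ := fun x => if x ≤ 1 then 0 else Real.log x + 1

/-- Claimed concave envelope: `x` on `[0,1]`, `log x + 1` for `x > 1`. -/
def E16 : ℝ → ℝ := fun x => if x ≤ 1 then x else Real.log x + 1

open Filter Topology

theorem ConcaveOn.of_le_of_exists_eq {𝕜 E β ι : Type*} [Semiring 𝕜] [PartialOrder 𝕜]
    [AddCommMonoid E] [AddCommMonoid β] [PartialOrder β] [IsOrderedAddMonoid β] [SMul 𝕜 E]
    [Module 𝕜 β] [PosSMulMono 𝕜 β] {s : Set E} {f : E → β} {g : ι → E → β}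
    (hs : Convex 𝕜 s) (hg : ∀ i, ConcaveOn 𝕜 s (g i)) (hle : ∀ x ∈ s, ∀ i, f x ≤ g i x)
    (hex : ∀ x ∈ s, ∃ i, f x = g i x) : ConcaveOn 𝕜 s f := by
  refine ⟨hs, fun x hx y hy a b ha hb hab => ?_⟩
  obtain ⟨i, hi⟩ := hex _ (hs hx hy ha hb hab)
  calc a • f x + b • f y ≤ a • g i x + b • g i y := by
        gcongr
        exacts [hle x hx i, hle y hy i]
    _ ≤ g i (a • x + b • y) := (hg i).2 hx hy ha hb hab
    _ = f (a • x + b • y) := hi.symm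

theorem ConcaveOn.smul_le_apply_smul {𝕜 E β : Type*} [Ring 𝕜] [PartialOrder 𝕜]
    [IsOrderedAddMonoid 𝕜] [AddCommGroup E] [Module 𝕜 E] [AddCommGroup β] [PartialOrder β]
    [IsOrderedAddMonoid β] [Module 𝕜 β] [PosSMulMono 𝕜 β] {s : Set E} {g : E → β}
    (hg : ConcaveOn 𝕜 s g) (h0 : 0 ∈ s) (hg0 : 0 ≤ g 0) {z : E} (hz : z ∈ s) {t : 𝕜}
    (ht0 : 0 ≤ t) (ht1 : t ≤ 1) : t • g z ≤ g (t • z) := by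
  have hchord := hg.2 h0 hz (sub_nonneg.2 ht1) ht0 (sub_add_cancel 1 t)
  rw [smul_zero, zero_add] at hchord
  exact le_add_of_nonneg_left (smul_nonneg (sub_nonneg.2 ht1) hg0) |>.trans hchord

theorem Real.log_add_one_sub_mul_le_neg_log {x y : ℝ} (hx : 0 < x) (hy : 0 < y) :
    Real.log x + 1 - x * y ≤ -Real.log y := by
  have h := Real.log_le_sub_one_of_pos (mul_pos hx hy)
  rw [Real.log_mul hx.ne' hy.ne'] at h
  linarith

theorem U16_sub_mul_le {x y : ℝ} (hx : 0 ≤ x) (hy : 0 < y) :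
    U16 x - x * y ≤ max (-Real.log y) 0 := by
  unfold U16
  split_ifs with h
  · exact le_max_of_le_right (by nlinarith)
  · exact le_max_of_le_left
      (Real.log_add_one_sub_mul_le_neg_log (by linarith [not_le.1 h]) hy)

theorem isGreatest_U16_sub_mul_of_lt_one {y : ℝ} (hy0 : 0 < y) (hy1 : y < 1) :
    IsGreatest ((fun x => U16 x - x * y) '' Ici 0) (-Real.log y) := by
  refine ⟨⟨y⁻¹, mem_Ici.2 (inv_nonneg.2 hy0.le), ?_⟩, ?_⟩
  · have hinv : ¬ y⁻¹ ≤ 1 := not_le.2 ((one_lt_inv₀ hy0).2 hy1)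
    simp only [U16, if_neg hinv, Real.log_inv, inv_mul_cancel₀ hy0.ne']
    ring
  · rintro _ ⟨x, hx, rfl⟩
    simpa [max_eq_left (neg_nonneg.2 (Real.log_nonpos hy0.le hy1.le))]
      using U16_sub_mul_le hx hy0

theorem isGreatest_U16_sub_mul_of_one_le {y : ℝ} (hy : 1 ≤ y) :
    IsGreatest ((fun x => U16 x - x * y) '' Ici 0) 0 := by
  refine ⟨⟨0, self_mem_Ici, by simp [U16]⟩, ?_⟩
  rintro _ ⟨x, hx, rfl⟩
  simpa [max_eq_right (neg_nonpos.2 (Real.log_nonneg hy))]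
    using U16_sub_mul_le hx (zero_lt_one.trans_le hy)

theorem U16_le_E16 {x : ℝ} (hx : 0 ≤ x) : U16 x ≤ E16 x := by
  unfold U16 E16
  split_ifs
  exacts [hx, le_rfl]

theorem E16_le_mul_sub_log {x y : ℝ} (hy0 : 0 < y) (hy1 : y ≤ 1) :
    E16 x ≤ x * y - Real.log y := by
  unfold E16
  split_ifs with h
  · nlinarith [Real.log_le_sub_one_of_pos hy0]
  · linarith [Real.log_add_one_sub_mul_le_neg_log (x := x) (by linarith [not_le.1 h]) hy0]

theorem exists_E16_eq_mul_sub_log (x : ℝ) :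
    ∃ y ∈ Ioc (0 : ℝ) 1, E16 x = x * y - Real.log y := by
  by_cases h : x ≤ 1
  · exact ⟨1, ⟨one_pos, le_rfl⟩, by simp [E16, h]⟩
  · have hx1 : 1 < x := not_le.1 h
    refine ⟨x⁻¹, ⟨inv_pos.2 (by linarith), inv_le_one_of_one_le₀ hx1.le⟩, ?_⟩
    rw [E16, if_neg h, Real.log_inv, mul_inv_cancel₀ (by linarith)]
    ring

theorem concaveOn_E16 : ConcaveOn ℝ (Ici 0) E16 := by
  refine ConcaveOn.of_le_of_exists_eq (g := fun (y : Ioc (0 : ℝ) 1) x => x * y - Real.log y)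
    (convex_Ici 0) (fun y => ?_) (fun _ _ y => E16_le_mul_sub_log y.2.1 y.2.2)
    (fun x _ => ?_)
  · exact ((LinearMap.mulRight ℝ (y : ℝ)).concaveOn (convex_Ici 0)).sub
      (convexOn_const _ (convex_Ici 0))
  · obtain ⟨y, hy, hEy⟩ := exists_E16_eq_mul_sub_log x
    exact ⟨⟨y, hy⟩, hEy⟩

theorem le_of_concaveOn_of_U16_le {g : ℝ → ℝ} (hg : ConcaveOn ℝ (Ici 0) g)
    (hU : ∀ x ∈ Ici (0 : ℝ), U16 x ≤ g x) {x : ℝ} (hx0 : 0 ≤ x) (hx1 : x ≤ 1) : x ≤ g x := by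
  have hg0 : 0 ≤ g 0 := by simpa [U16] using hU 0 self_mem_Ici
  have hchord : ∀ z ∈ Ioi (1 : ℝ), x / z * (Real.log z + 1) ≤ g x := by
    intro z (hz : 1 < z)
    have hz0 : 0 < z := zero_lt_one.trans hz
    have hgz : Real.log z + 1 ≤ g z := by
      simpa [U16, not_le.2 hz] using hU z hz0.le
    calc x / z * (Real.log z + 1) ≤ x / z * g z := by gcongr
      _ ≤ g (x / z * z) := hg.smul_le_apply_smul self_mem_Ici hg0 hz0.le (by positivity)
          ((div_le_one hz0).2 (by linarith))
      _ = g x := by rw [div_mul_cancel₀ x hz0.ne']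
  have hlim : Tendsto (fun z => x / z * (Real.log z + 1)) (𝓝[>] 1) (𝓝 x) := by
    have hcont : ContinuousAt (fun z => x / z * (Real.log z + 1)) 1 :=
      (continuousAt_const.div continuousAt_id one_ne_zero).mul
        ((Real.continuousAt_log one_ne_zero).add continuousAt_const)
    simpa using hcont.tendsto.mono_left nhdsWithin_le_nhds
  exact le_of_tendsto hlim (eventually_nhdsWithin_of_forall hchord)

theorem E16_le_of_concaveOn {g : ℝ → ℝ} (hg : ConcaveOn ℝ (Ici 0) g)
    (hU : ∀ x ∈ Ici (0 : ℝ), U16 x ≤ g x) {x : ℝ} (hx : 0 ≤ x) : E16 x ≤ g x := by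
  by_cases h : x ≤ 1
  · simpa [E16, h] using le_of_concaveOn_of_U16_le hg hU hx h
  · simpa [E16, U16, h] using hU x hx

/-- For `U(x) = 0` on `[0,1]`, `log x + 1` for `x > 1`, the conjugate is
`V(y) = -log y` on `(0,1)` and `V(y) = 0` for `y ≥ 1`, and the concave envelope is
`x` on `[0,1]`, `log x + 1` for `x > 1`. -/
theorem example_conjugate_and_envelope :
    (∀ y : ℝ, 0 < y → y < 1 →
      sSup ((fun x => U16 x - x * y) '' Ici 0) = -Real.log y) ∧
    (∀ y : ℝ, 1 ≤ y → sSup ((fun x => U16 x - x * y) '' Ici 0) = 0) ∧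
    ConcaveOn ℝ (Ici 0) E16 ∧
    (∀ x ∈ Ici (0:ℝ), U16 x ≤ E16 x) ∧
    (∀ g : ℝ → ℝ, ConcaveOn ℝ (Ici 0) g → (∀ x ∈ Ici (0:ℝ), U16 x ≤ g x) →
      ∀ x ∈ Ici (0:ℝ), E16 x ≤ g x) :=
  ⟨fun _ hy0 hy1 => (isGreatest_U16_sub_mul_of_lt_one hy0 hy1).csSup_eq,
    fun _ hy => (isGreatest_U16_sub_mul_of_one_le hy).csSup_eq, concaveOn_E16,
    fun _ hx => U16_le_E16 hx, fun _ hg hU _ hx => E16_le_of_concaveOn hg hU hx⟩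
end
end
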